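/- Let X be a Polish space, φ a continuous flow on X, and U ⊆ X a nonempty open set containing a periodic point of the flow. Then the set of invariant Borel probability measures μ with μ(U) = 0 is a closed subset with empty interior in the set M¹(X) of all invariant Borel probability measures with the weak topology. -/

import Mathlib

open MeasureTheory Filter Topology

/-- A continuous flow on a topological space. -/
def IsFlow {X : Type*} [TopologicalSpace X] (φ : ℝ → X → X) : Prop :=
  Continuous (fun p : ℝ × X => φ p.1 p.2) ∧ (∀ x, φ 0 x = x) ∧
    ∀ s t x, φ (t + s) x = φ t (φ s x)

/-- A point is periodic if it is fixed by `φ l` for some `l > 0`. -/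
def IsPeriodicPt {X : Type*} (φ : ℝ → X → X) (x : X) : Prop := ∃ l > 0, φ l x = x

/-- A Borel probability measure invariant under the flow. -/
def InvariantProb {X : Type*} [MeasurableSpace X] (φ : ℝ → X → X)
    (μ : ProbabilityMeasure X) : Prop :=
  ∀ t : ℝ, ∀ A : Set X, MeasurableSet A → μ.toMeasure (φ t ⁻¹' A) = μ.toMeasure A

/-!
Closedness is the portmanteau theorem: `μ ↦ μ U` is lower semicontinuous for open `U`.
For the interior, the uniform measure `ν` on the periodic orbit through `x ∈ U` is invariant and
charges `U`; so for an invariant `μ` with `μ U = 0` the invariant measures `(1 - s) μ + s ν`,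
which charge `U` for `s > 0`, tend to `μ` as `s → 0`.
-/

open unitInterval
open scoped ENNReal NNReal

namespace MeasureTheory.ProbabilityMeasure

variable {Ω : Type*} [MeasurableSpace Ω]

noncomputable def mix (μ ν : ProbabilityMeasure Ω) (s : I) : ProbabilityMeasure Ω :=
  ⟨toNNReal (σ s) • (μ : Measure Ω) + toNNReal s • (ν : Measure Ω),
    ⟨by simp [← ENNReal.coe_add]⟩⟩

section mix

variable (μ ν : ProbabilityMeasure Ω)

theorem toMeasure_mix (s : I) :
    (mix μ ν s : Measure Ω) = toNNReal (σ s) • (μ : Measure Ω) + toNNReal s • (ν : Measure Ω) :=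
  rfl

@[simp]
theorem mix_zero : mix μ ν 0 = μ := by
  ext1; simp [toMeasure_mix]

theorem measure_mix_ne_zero {s : I} (hs : s ≠ 0) {G : Set Ω} (hG : (ν : Measure Ω) G ≠ 0) :
    (mix μ ν s : Measure Ω) G ≠ 0 := by
  have hs' : (toNNReal s : ℝ≥0∞) ≠ 0 := by
    rw [ENNReal.coe_ne_zero, Ne, ← NNReal.coe_eq_zero, coe_toNNReal]
    exact fun h => hs (Subtype.ext h)
  rw [toMeasure_mix, Measure.add_apply, Measure.smul_apply, Measure.smul_apply]
  exact fun h => mul_ne_zero hs' hG (add_eq_zero.1 h).2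

end mix

section topology

variable [TopologicalSpace Ω] [OpensMeasurableSpace Ω]

theorem lowerSemicontinuous_measure_of_isOpen [HasOuterApproxClosed Ω] {G : Set Ω}
    (hG : IsOpen G) : LowerSemicontinuous fun μ : ProbabilityMeasure Ω => (μ : Measure Ω) G :=
  lowerSemicontinuous_iff_le_liminf.2 fun _ => le_liminf_measure_open_of_tendsto tendsto_id hG

theorem isClosed_setOf_measure_eq_zero [HasOuterApproxClosed Ω] {G : Set Ω} (hG : IsOpen G) :
    IsClosed {μ : ProbabilityMeasure Ω | (μ : Measure Ω) G = 0} := by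
  simpa only [Set.preimage, Set.mem_Iic, nonpos_iff_eq_zero] using
    (lowerSemicontinuous_measure_of_isOpen hG).isClosed_preimage 0

theorem continuous_mix (μ ν : ProbabilityMeasure Ω) : Continuous (mix μ ν) := by
  rw [(toFiniteMeasure_isEmbedding Ω).continuous_iff]
  have : (toFiniteMeasure ∘ mix μ ν) =
      fun s => toNNReal (σ s) • μ.toFiniteMeasure + toNNReal s • ν.toFiniteMeasure := by
    funext s; ext1; rfl
  rw [this]
  fun_prop

theorem interior_setOf_measure_eq_zero_eq_empty {P : ProbabilityMeasure Ω → Prop}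
    (hP : ∀ μ ν s, P μ → P ν → P (mix μ ν s)) {ν : ProbabilityMeasure Ω} (hν : P ν)
    {G : Set Ω} (hG : (ν : Measure Ω) G ≠ 0) :
    interior {μ : {m // P m} | (μ.1 : Measure Ω) G = 0} = ∅ := by
  refine Set.eq_empty_of_forall_notMem fun μ hμ => ?_
  set γ : I → {m // P m} := fun s => ⟨mix μ.1 ν s, hP _ _ s μ.2 hν⟩
  have hγ : Continuous γ := (continuous_mix μ.1 ν).subtype_mk _
  -- Only `s = 0` is sent into the interior, so `{0}` would be open in the connected space `I`.
  have hpre : γ ⁻¹' interior {μ : {m // P m} | (μ.1 : Measure Ω) G = 0} = {0} := by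
    refine Set.Subset.antisymm (fun s hs => ?_) ?_
    · by_contra hs0
      have hs' := interior_subset hs
      exact measure_mix_ne_zero μ.1 ν hs0 hG hs'
    · simpa [γ, mix_zero] using hμ
  have hclopen : IsClopen ({0} : Set I) :=
    ⟨isClosed_singleton, hpre ▸ isOpen_interior.preimage hγ⟩
  simpa using (isClopen_iff.1 hclopen).resolve_left (Set.singleton_nonempty 0).ne_empty

end topology

end MeasureTheory.ProbabilityMeasure

/-- The uniform measure on an `l`-periodic orbit: normalised Haar measure on `ℝ / lℤ`, pushed
forward along `t ↦ φ t x`. -/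
noncomputable def orbitMeasure {X : Type*} [MeasurableSpace X] (φ : ℝ → X → X) (x : X) {l : ℝ}
    [Fact (0 < l)] (h : Function.Periodic (fun t => φ t x) l) : Measure X :=
  AddCircle.haarAddCircle.map h.lift

namespace IsFlow

variable {X : Type*} [TopologicalSpace X] {φ : ℝ → X → X}

theorem continuous_apply (hφ : IsFlow φ) (t : ℝ) : Continuous (φ t) :=
  hφ.1.comp (continuous_const.prodMk continuous_id)

theorem continuous_orbit (hφ : IsFlow φ) (x : X) : Continuous fun t => φ t x :=
  hφ.1.comp (continuous_id.prodMk continuous_const)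

theorem periodic_orbit (hφ : IsFlow φ) {x : X} {l : ℝ} (hx : φ l x = x) :
    Function.Periodic (fun t => φ t x) l := fun t => by
  simp only [hφ.2.2, hx]

theorem continuous_lift_orbit (hφ : IsFlow φ) {x : X} {l : ℝ}
    (h : Function.Periodic (fun t => φ t x) l) : Continuous h.lift :=
  (QuotientAddGroup.isQuotientMap_mk _).continuous_iff.2 (hφ.continuous_orbit x)

variable [MeasurableSpace X] [BorelSpace X] {x : X} {l : ℝ} [Fact (0 < l)]

theorem isProbabilityMeasure_orbitMeasure (hφ : IsFlow φ)
    (h : Function.Periodic (fun t => φ t x) l) : IsProbabilityMeasure (orbitMeasure φ x h) :=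
  Measure.isProbabilityMeasure_map (hφ.continuous_lift_orbit h).aemeasurable

theorem map_orbitMeasure (hφ : IsFlow φ) (h : Function.Periodic (fun t => φ t x) l)
    (t : ℝ) : (orbitMeasure φ x h).map (φ t) = orbitMeasure φ x h := by
  have hlift := hφ.continuous_lift_orbit h
  -- On the orbit, `φ t` is the rotation by `t`, which preserves Haar measure.
  have hcomm : φ t ∘ h.lift = h.lift ∘ ((t : AddCircle l) + ·) := by
    funext θ
    induction θ using QuotientAddGroup.induction_on with
    | H s => simp only [Function.comp_apply, ← QuotientAddGroup.mk_add, h.lift_coe, hφ.2.2]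
  rw [orbitMeasure, Measure.map_map (hφ.continuous_apply t).measurable hlift.measurable, hcomm,
    ← Measure.map_map hlift.measurable (measurable_const_add _),
    Measure.IsAddLeftInvariant.map_add_left_eq_self]

theorem orbitMeasure_ne_zero (hφ : IsFlow φ) (h : Function.Periodic (fun t => φ t x) l)
    {U : Set X} (hU : IsOpen U) (hxU : x ∈ U) : orbitMeasure φ x h U ≠ 0 := by
  have hlift := hφ.continuous_lift_orbit h
  rw [orbitMeasure, Measure.map_apply hlift.measurable hU.measurableSet]
  refine (hU.preimage hlift).measure_ne_zero _ ⟨((0 : ℝ) : AddCircle l), ?_⟩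
  simpa only [Set.mem_preimage, h.lift_coe, hφ.2.1] using hxU

end IsFlow

namespace InvariantProb

variable {X : Type*} [MeasurableSpace X] {φ : ℝ → X → X}

theorem of_map_eq (hφ : ∀ t, Measurable (φ t)) {μ : ProbabilityMeasure X}
    (h : ∀ t, (μ : Measure X).map (φ t) = μ) : InvariantProb φ μ := fun t A hA => by
  rw [← Measure.map_apply (hφ t) hA, h]

theorem mix {μ ν : ProbabilityMeasure X} (hμ : InvariantProb φ μ) (hν : InvariantProb φ ν)
    (s : I) : InvariantProb φ (μ.mix ν s) := fun t A hA => by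
  simp only [ProbabilityMeasure.toMeasure_mix, Measure.add_apply, Measure.smul_apply,
    hμ t A hA, hν t A hA]

end InvariantProb

theorem measures_vanishing_on_open_isClosed_empty_interior_general
    {X : Type*} [TopologicalSpace X] [PolishSpace X] [MeasurableSpace X] [BorelSpace X]
    (φ : ℝ → X → X) (hflow : IsFlow φ)
    (U : Set X) (hU : IsOpen U)
    (hper : ∃ x ∈ U, IsPeriodicPt φ x) :
    IsClosed {μ : {m : ProbabilityMeasure X // InvariantProb φ m} | μ.1.toMeasure U = 0} ∧
    interior {μ : {m : ProbabilityMeasure X // InvariantProb φ m} | μ.1.toMeasure U = 0}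
      = ∅ := by
  refine ⟨(ProbabilityMeasure.isClosed_setOf_measure_eq_zero hU).preimage continuous_subtype_val,
    ?_⟩
  obtain ⟨x, hxU, l, hl, hx⟩ := hper
  have : Fact (0 < l) := ⟨hl⟩
  have h := hflow.periodic_orbit hx
  let ν : ProbabilityMeasure X := ⟨orbitMeasure φ x h, hflow.isProbabilityMeasure_orbitMeasure h⟩
  have hν : InvariantProb φ ν :=
    .of_map_eq (fun t => (hflow.continuous_apply t).measurable) (hflow.map_orbitMeasure h)
  exact ProbabilityMeasure.interior_setOf_measure_eq_zero_eq_empty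
    (fun _ _ s hμ hν => hμ.mix hν s) hν (hflow.orbitMeasure_ne_zero h hU hxU)

/-- On a Polish space, if a nonempty open set `U` contains a periodic point of a
continuous flow, then the invariant Borel probability measures vanishing on `U`
form a closed subset with empty interior in the set of all invariant Borel
probability measures with the weak topology. -/
theorem measures_vanishing_on_open_isClosed_empty_interior
    {X : Type*} [TopologicalSpace X] [PolishSpace X] [MeasurableSpace X] [BorelSpace X]
    (φ : ℝ → X → X) (hflow : IsFlow φ)
    (U : Set X) (hU : IsOpen U) (hUne : U.Nonempty)
    (hper : ∃ x ∈ U, IsPeriodicPt φ x) :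
    IsClosed {μ : {m : ProbabilityMeasure X // InvariantProb φ m} | μ.1.toMeasure U = 0} ∧
    interior {μ : {m : ProbabilityMeasure X // InvariantProb φ m} | μ.1.toMeasure U = 0}
      = ∅ :=
  measures_vanishing_on_open_isClosed_empty_interior_general φ hflow U hU hper
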